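/- arXiv:0803.0722 — 2 statements merged into one kernel-verified Lean document; each statement's English description precedes it below -/
import Mathlib

section
/- For any nonzero strictly upper triangular m×m matrix Z, there exists an invertible upper triangular matrix G such that the (1,m) entry of G Z G^{-1} is nonzero. -/
/-!
Pick an entry `Z i j ≠ 0`, necessarily with `i < j`. Conjugating by the upper triangular
transvection `1 + c E₀ᵢ` adds `c` times row `i` to row `0` and only alters column `i`, so a
suitable `c` makes the entry `(0, j)` nonzero. Conjugating next by `1 - c E_{j,m-1}` adds `c` times
column `j` to column `m - 1` and only alters row `j ≠ 0`, which moves the nonzero entry to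
`(0, m - 1)`. Choosing `c ∈ {0, 1}` suffices each time.
-/

open Matrix

lemma exists_add_mul_ne_zero {R : Type*} [NonAssocSemiring R] (a : R) {b : R} (hb : b ≠ 0) :
    ∃ c : R, a + c * b ≠ 0 := by
  by_cases ha : a = 0
  · exact ⟨1, by rwa [ha, zero_add, one_mul]⟩
  · exact ⟨0, by rwa [zero_mul, add_zero]⟩

namespace Matrix

variable {n R : Type*} [Fintype n] [DecidableEq n] [CommRing R]

def transvectionUnit {i j : n} (hij : i ≠ j) (c : R) : (Matrix n n R)ˣ where
  val := transvection i j c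
  inv := transvection i j (-c)
  val_inv := by simp [transvection_mul_transvection_same i j hij]
  inv_val := by simp [transvection_mul_transvection_same i j hij]

@[simp]
lemma coe_transvectionUnit {i j : n} (hij : i ≠ j) (c : R) :
    (transvectionUnit hij c : Matrix n n R) = transvection i j c :=
  rfl

@[simp]
lemma coe_transvectionUnit_inv {i j : n} (hij : i ≠ j) (c : R) :
    (↑(transvectionUnit hij c)⁻¹ : Matrix n n R) = transvection i j (-c) :=
  rfl

lemma transvectionUnit_conj_apply_of_ne {i j b : n} (hij : i ≠ j) (c : R) (M : Matrix n n R)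
    (hb : b ≠ j) :
    ((transvectionUnit hij c : Matrix n n R) * M * (↑(transvectionUnit hij c)⁻¹ : Matrix n n R)) i b
      = M i b + c * M j b := by
  simp only [coe_transvectionUnit, coe_transvectionUnit_inv,
    mul_transvection_apply_of_ne _ _ _ _ hb, transvection_mul_apply_same]

lemma transvectionUnit_inv_conj_apply_of_ne {i j a : n} (hij : i ≠ j) (c : R)
    (M : Matrix n n R) (ha : a ≠ i) :
    ((↑(transvectionUnit hij c)⁻¹ : Matrix n n R) * M * (transvectionUnit hij c : Matrix n n R)) a j
      = M a j + c * M a i := by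
  simp only [coe_transvectionUnit, coe_transvectionUnit_inv, mul_transvection_apply_same,
    transvection_mul_apply_of_ne _ _ _ _ ha]

variable [LinearOrder n]

lemma exists_upperTriangular_conj_apply_ne_zero_of_le_row {M : Matrix n n R} {i j k : n}
    (hki : k ≤ i) (hij : i ≠ j) (h : M i j ≠ 0) :
    ∃ G : (Matrix n n R)ˣ, BlockTriangular (G : Matrix n n R) id ∧
      ((G : Matrix n n R) * M * (↑G⁻¹ : Matrix n n R)) k j ≠ 0 := by
  rcases hki.eq_or_lt with rfl | hki
  · exact ⟨1, blockTriangular_one, by simpa using h⟩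
  obtain ⟨c, hc⟩ := exists_add_mul_ne_zero (M k j) h
  refine ⟨transvectionUnit hki.ne c, blockTriangular_transvection hki.le c, ?_⟩
  rwa [transvectionUnit_conj_apply_of_ne _ _ _ hij.symm]

lemma exists_upperTriangular_conj_apply_ne_zero_of_le_col {M : Matrix n n R} {i j l : n}
    (hjl : j ≤ l) (hij : i ≠ j) (h : M i j ≠ 0) :
    ∃ G : (Matrix n n R)ˣ, BlockTriangular (G : Matrix n n R) id ∧
      ((G : Matrix n n R) * M * (↑G⁻¹ : Matrix n n R)) i l ≠ 0 := by
  rcases hjl.eq_or_lt with rfl | hjl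
  · exact ⟨1, blockTriangular_one, by simpa using h⟩
  obtain ⟨c, hc⟩ := exists_add_mul_ne_zero (M i l) h
  refine ⟨(transvectionUnit hjl.ne c)⁻¹, blockTriangular_transvection hjl.le (-c), ?_⟩
  rwa [inv_inv, transvectionUnit_inv_conj_apply_of_ne _ _ _ hij]

end Matrix

/-- For any nonzero strictly upper triangular `m × m` matrix `Z`, there is an invertible
upper triangular `G` with `(G Z G⁻¹)` having nonzero `(1,m)` entry. -/
theorem stmt13 {K : Type*} [Field K] {m : ℕ} (hm : 0 < m)
    (Z : Matrix (Fin m) (Fin m) K)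
    (hZ : ∀ i j, j ≤ i → Z i j = 0) (hZ0 : Z ≠ 0) :
    ∃ G : (Matrix (Fin m) (Fin m) K)ˣ,
      (∀ i j, j < i → (G : Matrix (Fin m) (Fin m) K) i j = 0) ∧
      ((G : Matrix (Fin m) (Fin m) K) * Z * (↑G⁻¹ : Matrix (Fin m) (Fin m) K))
        ⟨0, hm⟩ ⟨m - 1, by omega⟩ ≠ 0 := by
  obtain ⟨i, j, hZij⟩ : ∃ i j, Z i j ≠ 0 := by
    by_contra! h
    exact hZ0 (ext h)
  have hij : i < j := lt_of_not_ge fun hji => hZij (hZ i j hji)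
  have h0i : (⟨0, hm⟩ : Fin m) ≤ i := Fin.mk_le_of_le_val (Nat.zero_le _)
  have hjl : j ≤ ⟨m - 1, by omega⟩ := Fin.le_def.mpr (by have := j.isLt; simp only; omega)
  obtain ⟨G₁, hG₁, h₁⟩ := exists_upperTriangular_conj_apply_ne_zero_of_le_row h0i hij.ne hZij
  obtain ⟨G₂, hG₂, h₂⟩ :=
    exists_upperTriangular_conj_apply_ne_zero_of_le_col hjl (h0i.trans_lt hij).ne h₁
  refine ⟨G₂ * G₁, fun p q hqp => (hG₂.mul hG₁) hqp, ?_⟩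
  simpa only [_root_.mul_inv_rev, Units.val_mul, mul_assoc] using h₂
end

section
/- For n = 3m, the set of pairs (X,Y) of strictly upper triangular n×n matrices that are block strictly upper triangular with respect to the partition of {1,...,3m} into three consecutive blocks of size m (i.e., the three diagonal blocks of size m vanish) and commute, has dimension at least 5m². Consequently, for m ≥ 10, CT_{3m} has an irreducible component of dimension exceeding (3m)(3m+3)/2, so CT_{3m} is not a complete intersection. -/
/-!
The pairs of `m × m` block matrices `X = [[0, 1 + A, C], [0, 0, B], [0, 0, 0]]`,
`Y = [[0, (1 + A) D, C'], [0, 0, D B], [0, 0, 0]]` commute and form a polynomial family with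
`5m²` parameters. Free the parameters one at a time (the entries of `D`, then `C`, `C'`, `B`,
`A`): each newly freed parameter equals, up to a constant, one matrix entry that is constant on
the previous stage, so the closures of the images form a strictly increasing chain of `5m² + 1`
irreducible closed sets. The image is irreducible, hence lies in an irreducible component of
`CT_{3m}` of dimension at least `5m²`, and `5m² > 3m(3m+3)/2` once `m ≥ 10`.
-/

open Matrix Polynomial

/-- Points of the affine space `T_n × T_n` (resp. `U_n × U_n`), encoded as functions
from (index pairs for X) ⊕ (index pairs for Y) to the field. -/
abbrev Pt (n : ℕ) (K : Type*) := ((Fin n × Fin n) ⊕ (Fin n × Fin n)) → K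

/-- The Zariski topology on the affine space of pairs of matrices: generated by
complements of zero loci of polynomials. -/
noncomputable instance ptTop (n : ℕ) (K : Type*) [CommRing K] : TopologicalSpace (Pt n K) :=
  TopologicalSpace.generateFrom
    { U | ∃ p : MvPolynomial ((Fin n × Fin n) ⊕ (Fin n × Fin n)) K,
        U = {x | MvPolynomial.eval x p ≠ 0} }

/-- The first matrix of the pair encoded by a point. -/
def Xof {n : ℕ} {K : Type*} (x : Pt n K) : Matrix (Fin n) (Fin n) K :=
  Matrix.of fun i j => x (Sum.inl (i, j))

/-- The second matrix of the pair encoded by a point. -/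
def Yof {n : ℕ} {K : Type*} (x : Pt n K) : Matrix (Fin n) (Fin n) K :=
  Matrix.of fun i j => x (Sum.inr (i, j))

/-- `CT_n`: pairs of commuting upper triangular matrices. -/
def CTset (n : ℕ) (K : Type*) [CommRing K] : Set (Pt n K) :=
  {x | (∀ i j, j < i → Xof x i j = 0) ∧ (∀ i j, j < i → Yof x i j = 0) ∧
    Xof x * Yof x = Yof x * Xof x}

/-- `NT_n`: pairs of commuting strictly upper triangular matrices. -/
def NTset (n : ℕ) (K : Type*) [CommRing K] : Set (Pt n K) :=
  {x | (∀ i j, j ≤ i → Xof x i j = 0) ∧ (∀ i j, j ≤ i → Yof x i j = 0) ∧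
    Xof x * Yof x = Yof x * Xof x}

/-- `CT_n^0`: the Zariski closure of the set of commuting pairs of regular
(minimal polynomial of degree `n`) upper triangular matrices. -/
def CT0 (n : ℕ) (K : Type*) [Field K] : Set (Pt n K) :=
  closure {x | x ∈ CTset n K ∧ (minpoly K (Xof x)).natDegree = n ∧
    (minpoly K (Yof x)).natDegree = n}

/-- Commuting pairs of strictly upper triangular `3m × 3m` matrices whose three
consecutive `m × m` diagonal blocks vanish (indices `i, j` in the same block iff
`⌊i/m⌋ = ⌊j/m⌋`). -/
def B3set (m : ℕ) (K : Type*) [CommRing K] : Set (Pt (3 * m) K) :=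
  {x | x ∈ NTset (3 * m) K ∧
    ∀ i j : Fin (3 * m), (i : ℕ) / m = (j : ℕ) / m → Xof x i j = 0 ∧ Yof x i j = 0}

open MvPolynomial Set Topology

/-- On `Pt n K` this is, definitionally, the instance `ptTop n K`. -/
abbrev affineZariski (K σ : Type*) [CommRing K] : TopologicalSpace (σ → K) :=
  TopologicalSpace.generateFrom {U | ∃ p : MvPolynomial σ K, U = {x | eval x p ≠ 0}}

section Zariski

attribute [local instance] affineZariski

variable {K : Type*} [CommRing K] {σ τ : Type*}

theorem isOpen_setOf_eval_ne_zero (p : MvPolynomial σ K) :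
    IsOpen {x : σ → K | eval x p ≠ 0} :=
  TopologicalSpace.GenerateOpen.basic _ ⟨p, rfl⟩

theorem isClosed_setOf_eval_eq (p : MvPolynomial σ K) (v : K) :
    IsClosed {x : σ → K | eval x p = v} := by
  have h : {x : σ → K | eval x p = v} = {x | eval x (p - MvPolynomial.C v) ≠ 0}ᶜ := by
    ext x; simp [sub_eq_zero]
  exact h ▸ (isOpen_setOf_eval_ne_zero _).isClosed_compl

theorem isClosed_setOf_apply_eq (s : σ) (v : K) : IsClosed {x : σ → K | x s = v} := by
  simpa using isClosed_setOf_eval_eq (X s) v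

theorem exists_eval_ne_zero_subset_of_isOpen [IsDomain K] {U : Set (σ → K)} (hU : IsOpen U)
    {x : σ → K} (hx : x ∈ U) :
    ∃ p : MvPolynomial σ K, eval x p ≠ 0 ∧ {y | eval y p ≠ 0} ⊆ U := by
  induction hU generalizing x with
  | basic V hV =>
    obtain ⟨p, rfl⟩ := hV
    exact ⟨p, hx, subset_rfl⟩
  | univ => exact ⟨1, by simp, subset_univ _⟩
  | inter U V _ _ ihU ihV =>
    obtain ⟨p, hp, hpU⟩ := ihU hx.1
    obtain ⟨q, hq, hqV⟩ := ihV hx.2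
    refine ⟨p * q, by simp [hp, hq], fun y hy => ?_⟩
    rw [mem_ofPred, map_mul] at hy
    exact ⟨hpU (left_ne_zero_of_mul hy), hqV (right_ne_zero_of_mul hy)⟩
  | sUnion S _ ih =>
    obtain ⟨V, hVS, hxV⟩ := hx
    obtain ⟨p, hp, hpV⟩ := ih V hVS hxV
    exact ⟨p, hp, hpV.trans (subset_sUnion_of_mem hVS)⟩

/-- Over an infinite field a nonzero polynomial has a nonvanishing value, so any two nonempty
open sets meet. -/
instance [IsDomain K] [Infinite K] : IrreducibleSpace (σ → K) := by
  refine { toNonempty := ⟨0⟩, isPreirreducible_univ := ?_ }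
  rintro u v hu hv ⟨x, -, hxu⟩ ⟨y, -, hyv⟩
  obtain ⟨p, hp, hpu⟩ := exists_eval_ne_zero_subset_of_isOpen hu hxu
  obtain ⟨q, hq, hqv⟩ := exists_eval_ne_zero_subset_of_isOpen hv hyv
  have hpq : p * q ≠ 0 := mul_ne_zero (by rintro rfl; simp at hp) (by rintro rfl; simp at hq)
  obtain ⟨z, hz⟩ : ∃ z, eval z (p * q) ≠ 0 := by
    by_contra! h
    exact hpq (MvPolynomial.funext fun z => by simpa using h z)
  rw [map_mul] at hz
  exact ⟨z, trivial, hpu (left_ne_zero_of_mul hz), hqv (right_ne_zero_of_mul hz)⟩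

theorem continuous_eval_polynomials (P : τ → MvPolynomial σ K) :
    Continuous fun (x : σ → K) (t : τ) => eval x (P t) := by
  refine continuous_generateFrom_iff.mpr ?_
  rintro _ ⟨q, rfl⟩
  convert isOpen_setOf_eval_ne_zero (bind₁ P q) using 1
  ext x
  simp only [preimage, mem_ofPred]
  rw [show eval x (bind₁ P q) = eval (fun t => eval x (P t)) q from
    eval₂Hom_bind₁ (RingHom.id K) x P q]

end Zariski

section Triangular

attribute [local instance] affineZariski

variable {K : Type*} [CommRing K] [IsDomain K] [Infinite K] {σ τ : Type*}

theorem isIrreducible_setOf_forall_imp_eq_zero (P : σ → Prop) :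
    IsIrreducible {e : σ → K | ∀ t, P t → e t = 0} := by
  classical
  have hcont : Continuous fun (e : σ → K) t => if P t then 0 else e t := by
    convert continuous_eval_polynomials (K := K) fun t => if P t then 0 else X t using 2 with e
    ext t
    split_ifs <;> simp
  have hrange : {e : σ → K | ∀ t, P t → e t = 0} =
      range fun (e : σ → K) t => if P t then 0 else e t := by
    ext e
    refine ⟨fun he => ⟨e, funext fun t => ?_⟩, ?_⟩
    · dsimp only
      split_ifs with h
      exacts [(he t h).symm, rfl]
    · rintro ⟨e, rfl⟩ t ht
      exact if_pos ht
  rw [hrange, ← image_univ]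
  exact (IrreducibleSpace.isIrreducible_univ _).image _ hcont.continuousOn

/-- The images of the coordinate flags `L k = {e | e t = 0 whenever k ≤ idx t}` form a strictly
increasing chain of irreducible closed sets: the coordinate `c s` is constant on the image of
`L (idx s)` but not on that of `L (idx s + 1)`. -/
theorem le_topologicalKrullDim_range_of_triangular {N : ℕ} (idx : σ ≃ Fin N)
    {φ : (σ → K) → τ → K} (hφ : Continuous φ) (c : σ → τ) (v : σ → K)
    (htri : ∀ s e, (∀ t, idx s < idx t → e t = 0) → φ e (c s) = v s + e s) :
    (N : WithBot ℕ∞) ≤ topologicalKrullDim (range φ) := by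
  classical
  let L (k : ℕ) : Set (σ → K) := {e | ∀ t, k ≤ (idx t : ℕ) → e t = 0}
  let ψ := rangeFactorization φ
  have hψ : Continuous ψ := hφ.subtype_mk _
  have hirr (k : ℕ) : IsIrreducible (ψ '' L k) :=
    (isIrreducible_setOf_forall_imp_eq_zero _).image ψ hψ.continuousOn
  let Z (k : Fin (N + 1)) : TopologicalSpace.IrreducibleCloseds (range φ) :=
    ⟨closure (ψ '' L k), (hirr k).closure, isClosed_closure⟩
  have hZ : StrictMono Z := by
    refine Fin.strictMono_iff_lt_succ.2 fun k => lt_of_le_of_ne ?_ fun heq => ?_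
    · exact closure_mono (image_mono fun e he t ht => he t (by simp at ht ⊢; omega))
    set s := idx.symm k
    have hW : IsClosed {y : range φ | y.1 (c s) = v s} :=
      (isClosed_setOf_apply_eq (c s) (v s)).preimage continuous_subtype_val
    have hsub : (Z k.castSucc : Set (range φ)) ⊆ {y | y.1 (c s) = v s} := by
      refine closure_minimal ?_ hW
      rintro _ ⟨e, he, rfl⟩
      have hs : e s = 0 := he s (by simp [s])
      have := htri s e fun t ht => he t (by simp [s] at ht ⊢; omega)
      simpa [ψ, hs] using this
    have hw : ψ (Pi.single s 1) ∈ (Z k.succ : Set (range φ)) := by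
      refine subset_closure ⟨_, fun t ht => Pi.single_eq_of_ne ?_ _, rfl⟩
      rintro rfl
      simp [s] at ht
    rw [← heq] at hw
    have := htri s (Pi.single s 1) fun t ht => Pi.single_eq_of_ne (by rintro rfl; simp at ht) _
    simpa [ψ, this] using hsub hw
  exact Order.LTSeries.length_le_krullDim (LTSeries.mk N Z hZ)

end Triangular

section Blocks

variable {R : Type*} [CommRing R] {m : ℕ}

theorem finProdFinEquiv_val_div {n : ℕ} (a : Fin n) (p : Fin m) :
    ((finProdFinEquiv (a, p) : Fin (n * m)) : ℕ) / m = a := by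
  rw [finProdFinEquiv_apply_val, Nat.add_mul_div_left _ _ p.pos, Nat.div_eq_of_lt p.2,
    zero_add]

/-- Block `a` consists of the indices `i` with `i / m = a`. -/
def ofBlocks (m : ℕ) (R : Type*) [CommRing R] :
    Matrix (Fin 3) (Fin 3) (Matrix (Fin m) (Fin m) R) ≃+* Matrix (Fin (3 * m)) (Fin (3 * m)) R :=
  (compRingEquiv (Fin 3) (Fin m) R).trans (reindexRingEquiv R finProdFinEquiv)

@[simp]
theorem ofBlocks_apply (M : Matrix (Fin 3) (Fin 3) (Matrix (Fin m) (Fin m) R)) (a b : Fin 3)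
    (p q : Fin m) :
    ofBlocks m R M (finProdFinEquiv (a, p)) (finProdFinEquiv (b, q)) = M a b p q := by
  simp [ofBlocks]

theorem map_ofBlocks {S : Type*} [CommRing S] (f : R →+* S)
    (M : Matrix (Fin 3) (Fin 3) (Matrix (Fin m) (Fin m) R)) :
    (ofBlocks m R M).map f = ofBlocks m S (M.map (·.map f)) :=
  rfl

def upperBlocks (P Q S : Matrix (Fin m) (Fin m) R) :
    Matrix (Fin 3) (Fin 3) (Matrix (Fin m) (Fin m) R) :=
  !![0, P, Q; 0, 0, S; 0, 0, 0]

@[simp]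
theorem upperBlocks_zero_one (P Q S : Matrix (Fin m) (Fin m) R) : upperBlocks P Q S 0 1 = P :=
  rfl

@[simp]
theorem upperBlocks_zero_two (P Q S : Matrix (Fin m) (Fin m) R) : upperBlocks P Q S 0 2 = Q :=
  rfl

@[simp]
theorem upperBlocks_one_two (P Q S : Matrix (Fin m) (Fin m) R) : upperBlocks P Q S 1 2 = S :=
  rfl

theorem upperBlocks_eq_zero_of_le (P Q S : Matrix (Fin m) (Fin m) R) {a b : Fin 3}
    (h : b ≤ a) : upperBlocks P Q S a b = 0 := by
  fin_cases a <;> fin_cases b <;> first | rfl | simp at h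

theorem upperBlocks_mul_upperBlocks (P Q S P' Q' S' : Matrix (Fin m) (Fin m) R) :
    upperBlocks P Q S * upperBlocks P' Q' S' = upperBlocks 0 (P * S') 0 := by
  rw [upperBlocks, upperBlocks, mul_fin_three]
  simp [upperBlocks]

theorem map_upperBlocks {S : Type*} [CommRing S] (f : R →+* S)
    (P Q T : Matrix (Fin m) (Fin m) R) :
    (upperBlocks P Q T).map (·.map f) = upperBlocks (P.map f) (Q.map f) (T.map f) := by
  refine Matrix.ext fun a b => ?_
  fin_cases a <;> fin_cases b <;> first | rfl | exact Matrix.map_zero _ (map_zero f)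

theorem ofBlocks_upperBlocks_apply_eq_zero (P Q S : Matrix (Fin m) (Fin m) R)
    {i j : Fin (3 * m)} (h : (j : ℕ) / m ≤ (i : ℕ) / m) :
    ofBlocks m R (upperBlocks P Q S) i j = 0 := by
  obtain ⟨⟨a, p⟩, rfl⟩ := finProdFinEquiv.surjective i
  obtain ⟨⟨b, q⟩, rfl⟩ := finProdFinEquiv.surjective j
  rw [finProdFinEquiv_val_div, finProdFinEquiv_val_div, Fin.val_fin_le] at h
  rw [ofBlocks_apply, upperBlocks_eq_zero_of_le P Q S h, Matrix.zero_apply]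

end Blocks

section CommutingPair

variable {R : Type*} {m : ℕ}

def ofPair {n : ℕ} (X Y : Matrix (Fin n) (Fin n) R) : Pt n R :=
  Sum.elim (fun ij => X ij.1 ij.2) (fun ij => Y ij.1 ij.2)

@[simp]
theorem Xof_ofPair {n : ℕ} (X Y : Matrix (Fin n) (Fin n) R) : Xof (ofPair X Y) = X :=
  rfl

@[simp]
theorem Yof_ofPair {n : ℕ} (X Y : Matrix (Fin n) (Fin n) R) : Yof (ofPair X Y) = Y :=
  rfl

variable [CommRing R]

theorem comp_ofPair {S : Type*} [CommRing S] (f : R →+* S) {n : ℕ}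
    (X Y : Matrix (Fin n) (Fin n) R) : f ∘ ofPair X Y = ofPair (X.map f) (Y.map f) := by
  funext x
  cases x <;> rfl

/-- `X₁₂ Y₂₃ = (1 + A) D B = Y₁₂ X₂₃`, so `X` and `Y` commute. -/
def blockPair (A B D C C' : Matrix (Fin m) (Fin m) R) : Pt (3 * m) R :=
  ofPair (ofBlocks m R (upperBlocks (1 + A) C B))
    (ofBlocks m R (upperBlocks ((1 + A) * D) C' (D * B)))

theorem blockPair_mem_B3set (A B D C C' : Matrix (Fin m) (Fin m) R) :
    blockPair A B D C C' ∈ B3set m R := by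
  have hle {i j : Fin (3 * m)} (h : j ≤ i) : (j : ℕ) / m ≤ (i : ℕ) / m :=
    Nat.div_le_div_right h
  refine ⟨⟨fun i j h => ?_, fun i j h => ?_, ?_⟩, fun i j h => ⟨?_, ?_⟩⟩
  · exact ofBlocks_upperBlocks_apply_eq_zero _ _ _ (hle h)
  · exact ofBlocks_upperBlocks_apply_eq_zero _ _ _ (hle h)
  · simp only [blockPair, Xof_ofPair, Yof_ofPair, ← map_mul, upperBlocks_mul_upperBlocks,
      mul_assoc]
  · exact ofBlocks_upperBlocks_apply_eq_zero _ _ _ h.ge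
  · exact ofBlocks_upperBlocks_apply_eq_zero _ _ _ h.ge

theorem comp_blockPair {S : Type*} [CommRing S] (f : R →+* S)
    (A B D C C' : Matrix (Fin m) (Fin m) R) :
    f ∘ blockPair A B D C C' = blockPair (A.map f) (B.map f) (D.map f) (C.map f) (C'.map f) := by
  have h1A : (1 + A).map f = 1 + A.map f := by
    rw [Matrix.map_add f (map_add f), Matrix.map_one f (map_zero f) (map_one f)]
  rw [blockPair, blockPair, comp_ofPair, map_ofBlocks, map_ofBlocks, map_upperBlocks,
    map_upperBlocks, Matrix.map_mul, Matrix.map_mul, h1A]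

end CommutingPair

section Parametrization

variable {R : Type*} [CommRing R] {m : ℕ}

def paramBlock (e : Fin 5 × Fin m × Fin m → R) (t : Fin 5) : Matrix (Fin m) (Fin m) R :=
  Matrix.of fun p q => e (t, p, q)

/-- The parameter blocks `t = 0, …, 4` are `D, C, C', B, A`. `A` comes last so that
`Y₁₂ = (1 + A) D` reads off `D` while `A` is still zero. -/
def blockPairParam (e : Fin 5 × Fin m × Fin m → R) : Pt (3 * m) R :=
  blockPair (paramBlock e 4) (paramBlock e 3) (paramBlock e 0) (paramBlock e 1) (paramBlock e 2)

def paramIndex (m : ℕ) : Fin 5 × Fin m × Fin m ≃ Fin (5 * (m * m)) :=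
  ((Equiv.refl _).prodCongr finProdFinEquiv).trans finProdFinEquiv

theorem paramIndex_lt_of_fst_lt {s t : Fin 5 × Fin m × Fin m} (h : s.1 < t.1) :
    paramIndex m s < paramIndex m t := by
  have hs := (finProdFinEquiv (s.2.1, s.2.2)).2
  have hmul := Nat.mul_le_mul_left (m * m) (Fin.lt_def.1 h)
  simp only [paramIndex, Equiv.trans_apply, Equiv.prodCongr_apply, Equiv.coe_refl, Prod.map,
    id, Fin.lt_def, finProdFinEquiv_apply_val] at hs hmul ⊢
  nlinarith

attribute [local instance] affineZariski

variable {K : Type*} [CommRing K]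

theorem continuous_blockPairParam :
    Continuous (blockPairParam : (Fin 5 × Fin m × Fin m → K) → Pt (3 * m) K) := by
  have h : (blockPairParam : (Fin 5 × Fin m × Fin m → K) → Pt (3 * m) K) =
      fun e c => MvPolynomial.eval e (blockPairParam MvPolynomial.X c) := by
    funext e
    change _ = MvPolynomial.eval e ∘ _
    rw [blockPairParam, blockPairParam, comp_blockPair]
    congr <;> ext <;> simp [paramBlock]
  exact h ▸ continuous_eval_polynomials _

theorem isIrreducible_range_blockPairParam [IsDomain K] [Infinite K] :
    IsIrreducible (range (blockPairParam : (Fin 5 × Fin m × Fin m → K) → Pt (3 * m) K)) := by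
  simpa using (IrreducibleSpace.isIrreducible_univ _).image _ continuous_blockPairParam.continuousOn

theorem le_topologicalKrullDim_range_blockPairParam [IsDomain K] [Infinite K] :
    ((5 * (m * m) : ℕ) : WithBot ℕ∞) ≤
      topologicalKrullDim
        (range (blockPairParam : (Fin 5 × Fin m × Fin m → K) → Pt (3 * m) K)) := by
  let blk (a : Fin 3) (p : Fin m) : Fin (3 * m) := finProdFinEquiv (a, p)
  -- the entries of `Y₁₂, X₁₃, Y₁₃, X₂₃, X₁₂` read off those of `D, C, C', B, A`
  refine le_topologicalKrullDim_range_of_triangular (paramIndex m) continuous_blockPairParam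
    (fun s => ![.inr (blk 0 s.2.1, blk 1 s.2.2), .inl (blk 0 s.2.1, blk 2 s.2.2),
      .inr (blk 0 s.2.1, blk 2 s.2.2), .inl (blk 1 s.2.1, blk 2 s.2.2),
      .inl (blk 0 s.2.1, blk 1 s.2.2)] s.1)
    (fun s => if s.1 = 4 then (1 : Matrix (Fin m) (Fin m) K) s.2.1 s.2.2 else 0) ?_
  rintro ⟨t, p, q⟩ e he
  fin_cases t
  · have hA : paramBlock e 4 = 0 :=
      Matrix.ext fun _ _ => he _ (paramIndex_lt_of_fst_lt (show (0 : Fin 5) < 4 by decide))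
    simp [blk, blockPairParam, blockPair, ofPair, hA]
    rfl
  all_goals simp [blk, blockPairParam, blockPair, ofPair, paramBlock]

end Parametrization

theorem exists_mem_irreducibleComponents_topologicalKrullDim_le {X : Type*} [TopologicalSpace X]
    {S T : Set X} (hTS : T ⊆ S) (hT : IsIrreducible T) :
    ∃ C ∈ irreducibleComponents S, topologicalKrullDim T ≤ topologicalKrullDim C := by
  have : IrreducibleSpace T := Subtype.irreducibleSpace hT
  have hirr : IsIrreducible (range (inclusion hTS)) := by
    simpa using (IrreducibleSpace.isIrreducible_univ T).image _
      (continuous_inclusion hTS).continuousOn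
  obtain ⟨C, hC, hsub⟩ := exists_mem_irreducibleComponents_subset_of_isIrreducible _ hirr
  exact ⟨C, hC, ((IsEmbedding.inclusion hTS).codRestrict C
    fun t => hsub (mem_range_self t)).isInducing.topologicalKrullDim_le⟩

theorem B3set_subset_CTset (m : ℕ) (K : Type*) [CommRing K] : B3set m K ⊆ CTset (3 * m) K :=
  fun _ ⟨⟨hX, hY, hXY⟩, _⟩ => ⟨fun i j h => hX i j h.le, fun i j h => hY i j h.le, hXY⟩

/-- The Vasconcelos example: the block variety has dimension at least `5m²`, hence for
`m ≥ 10` the variety `CT_{3m}` has an irreducible component of dimension exceeding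
`3m(3m+3)/2` and so is not a complete intersection. -/
theorem stmt16 (m : ℕ) (K : Type*) [Field K] [IsAlgClosed K] :
    ((5 * m ^ 2 : ℕ) : WithBot ℕ∞) ≤ topologicalKrullDim (B3set m K) ∧
    (10 ≤ m → ∃ C ∈ irreducibleComponents ↥(CTset (3 * m) K),
      ((3 * m * (3 * m + 3) / 2 : ℕ) : WithBot ℕ∞) < topologicalKrullDim C) := by
  set T := range (blockPairParam : (Fin 5 × Fin m × Fin m → K) → Pt (3 * m) K)
  have hTB : T ⊆ B3set m K := range_subset_iff.2 fun _ => blockPair_mem_B3set _ _ _ _ _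
  have hdim : ((5 * m ^ 2 : ℕ) : WithBot ℕ∞) ≤ topologicalKrullDim T :=
    sq m ▸ le_topologicalKrullDim_range_blockPairParam
  refine ⟨hdim.trans (IsEmbedding.inclusion hTB).isInducing.topologicalKrullDim_le,
    fun hm => ?_⟩
  obtain ⟨C, hC, hle⟩ := exists_mem_irreducibleComponents_topologicalKrullDim_le
    (hTB.trans (B3set_subset_CTset m K)) isIrreducible_range_blockPairParam
  have hlt : 3 * m * (3 * m + 3) / 2 < 5 * m ^ 2 := Nat.div_lt_of_lt_mul (by nlinarith)
  exact ⟨C, hC, (WithBot.coe_lt_coe.2 (Nat.cast_lt.2 hlt)).trans_le (hdim.trans hle)⟩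
end
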